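/- arXiv:2512.13195 — 2 statements merged into one kernel-verified Lean document; each statement's English description precedes it below -/
import Mathlib

section
/- Suppose there exists ν₀ > 0 such that every z ∈ ℂ with det Δ(z) = 0 satisfies Re(z) < −ν₀. Then for every 0 < ν < ν₀, the infimum of |det Δ(z)| over the closed half-plane {z ∈ ℂ : Re(z) ≥ −ν} is strictly positive. -/
open MeasureTheory Matrix Filter Complex Topology Set Metric

attribute [local instance] Matrix.frobeniusNormedAddCommGroup Matrix.frobeniusNormedSpace

/-!
Suppose the infimum is `0` and take `z_m` with `Re z_m ≥ -ν` and `det Δ(z_m) → 0`. As `Re z → ∞`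
both the exponential series and the finite Laplace transform tend to `0`, so `det Δ → 1`; hence
`Re z_m` is bounded and we may assume `Re z_m → x`. If `Im z_m` has a bounded subsequence, a limit
point is a zero of `det Δ` with real part `≥ -ν`. Otherwise `|Im z_m| → ∞`. Along a subsequence
the phases `exp (-i τ_k Im z_m)` converge to some `c_k` (Tychonoff), and by Riemann–Lebesgue the
Laplace part of `Δ (z + i Im z_m)` tends to `0` uniformly on compact sets. So
`det Δ (· + i Im z_m)` converges uniformly near `x` to the entire function
`g z = det (I + ∑ c_k A_k exp (-τ_k z))`, which vanishes at `x` and tends to `1` as `Re z → ∞`.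
Hurwitz's theorem then gives zeros of `det Δ` with real part arbitrarily close to `x ≥ -ν`, hence
greater than `-ν₀`.
-/

lemma norm_cexp_neg_ofReal_mul (t : ℝ) (z : ℂ) :
    ‖cexp (-(t : ℂ) * z)‖ = Real.exp (-(t * z.re)) := by
  simp [Complex.norm_exp]

lemma norm_cexp_neg_ofReal_mul_le {t T b : ℝ} {z : ℂ} (ht : t ∈ Icc 0 T) (hb : 0 ≤ b)
    (hz : -b ≤ z.re) : ‖cexp (-(t : ℂ) * z)‖ ≤ Real.exp (T * b) := by
  rw [norm_cexp_neg_ofReal_mul, Real.exp_le_exp]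
  nlinarith [ht.1, ht.2]

lemma tendsto_cexp_neg_ofReal_mul_comap_re_atTop {t : ℝ} (ht : 0 < t) :
    Tendsto (fun z => cexp (-(t : ℂ) * z)) (comap re atTop) (𝓝 0) := by
  rw [tendsto_zero_iff_norm_tendsto_zero]
  simp only [norm_cexp_neg_ofReal_mul]
  exact Real.tendsto_exp_atBot.comp
    (tendsto_neg_atTop_atBot.comp (tendsto_comap.const_mul_atTop ht))

lemma IsCompact.exists_forall_neg_le_re {K : Set ℂ} (hK : IsCompact K) :
    ∃ b, 0 ≤ b ∧ ∀ z ∈ K, -b ≤ z.re := by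
  obtain ⟨C, hC⟩ := hK.isBounded.exists_norm_le
  exact ⟨max C 0, le_max_right C 0, fun z hz => by
    linarith [neg_abs_le z.re, abs_re_le_norm z, hC z hz, le_max_left C 0]⟩

lemma tendstoUniformlyOn_of_lipschitzOnWith {ι X Y : Type*} [PseudoMetricSpace X]
    [PseudoMetricSpace Y] {l : Filter ι} {F : ι → X → Y} {f : X → Y} {K : Set X} {L : NNReal}
    (hK : IsCompact K) (hF : ∀ i, LipschitzOnWith L (F i) K)
    (h : ∀ x ∈ K, Tendsto (F · x) l (𝓝 (f x))) : TendstoUniformlyOn F f l K := by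
  have : CompactSpace K := isCompact_iff_compactSpace.1 hK
  have hequi : Equicontinuous fun i (x : K) => F i x :=
    (LipschitzWith.uniformEquicontinuous _ L fun i => (hF i).to_restrict).equicontinuous
  rw [tendstoUniformlyOn_iff_restrict]
  exact UniformFun.tendsto_iff_tendstoUniformly.1
    ((hequi.tendsto_uniformFun_iff_pi _ _).2 (tendsto_pi_nhds.2 fun x => h x x.2))

section DirichletSeries

variable {E : Type*} [NormedAddCommGroup E] [NormedSpace ℂ E]

noncomputable def dirichletSeries (τ : ℕ → ℝ) (B : ℕ → E) (z : ℂ) : E :=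
  ∑' k, cexp (-(τ k : ℂ) * z) • B k

variable {τ : ℕ → ℝ} {T b : ℝ} {B : ℕ → E}

lemma norm_dirichletSeries_term_le (hτ : ∀ k, τ k ∈ Icc 0 T) (hb : 0 ≤ b) {z : ℂ}
    (hz : -b ≤ z.re) (k : ℕ) : ‖cexp (-(τ k : ℂ) * z) • B k‖ ≤ Real.exp (T * b) * ‖B k‖ := by
  rw [norm_smul]
  exact mul_le_mul_of_nonneg_right (norm_cexp_neg_ofReal_mul_le (hτ k) hb hz) (norm_nonneg _)

lemma norm_dirichletSeries_le (hτ : ∀ k, τ k ∈ Icc 0 T) (hB : Summable (‖B ·‖)) (hb : 0 ≤ b)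
    {z : ℂ} (hz : -b ≤ z.re) : ‖dirichletSeries τ B z‖ ≤ Real.exp (T * b) * ∑' k, ‖B k‖ := by
  rw [← tsum_mul_left]
  exact tsum_of_norm_bounded (hB.mul_left _).hasSum (norm_dirichletSeries_term_le hτ hb hz)

lemma dirichletSeries_add_mul_I (τ : ℕ → ℝ) (B : ℕ → E) (z : ℂ) (y : ℝ) :
    dirichletSeries τ B (z + y * I)
      = dirichletSeries τ (fun k => cexp (-(τ k : ℂ) * (y * I)) • B k) z := by
  refine tsum_congr fun k => ?_
  rw [smul_smul, ← Complex.exp_add]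
  congr 2
  ring

variable [CompleteSpace E]

lemma summable_dirichletSeries_term (hτ : ∀ k, τ k ∈ Icc 0 T) (hB : Summable (‖B ·‖)) (z : ℂ) :
    Summable fun k => cexp (-(τ k : ℂ) * z) • B k :=
  .of_norm_bounded (hB.mul_left _)
    (norm_dirichletSeries_term_le hτ (le_max_left 0 _) (neg_le.1 (le_max_right 0 (-z.re))))

lemma dirichletSeries_sub (hτ : ∀ k, τ k ∈ Icc 0 T) {B' : ℕ → E} (hB : Summable (‖B ·‖))
    (hB' : Summable (‖B' ·‖)) (z : ℂ) :
    dirichletSeries τ B z - dirichletSeries τ B' z = dirichletSeries τ (B - B') z := by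
  simp only [dirichletSeries, Pi.sub_apply, smul_sub]
  exact (summable_dirichletSeries_term hτ hB z).tsum_sub (summable_dirichletSeries_term hτ hB' z)
    |>.symm

lemma differentiable_dirichletSeries (hτ : ∀ k, τ k ∈ Icc 0 T) (hB : Summable (‖B ·‖)) :
    Differentiable ℂ (dirichletSeries τ B) := by
  intro z₀
  have hU : IsOpen {z : ℂ | -(|z₀.re| + 1) < z.re} := isOpen_lt continuous_const continuous_re
  have hz₀ : -(|z₀.re| + 1) < z₀.re := by linarith [neg_abs_le z₀.re]
  refine (differentiableOn_tsum_of_summable_norm (hB.mul_left _) (fun k => ?_) hU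
    fun k z hz => norm_dirichletSeries_term_le hτ (by positivity) (le_of_lt hz) k
    ).differentiableAt (hU.mem_nhds hz₀)
  exact Differentiable.differentiableOn (by fun_prop)

lemma tendsto_dirichletSeries_re_atTop (hτ : ∀ k, 0 < τ k) (hB : Summable (‖B ·‖)) :
    Tendsto (dirichletSeries τ B) (comap re atTop) (𝓝 0) := by
  have hre : ∀ᶠ z in comap re atTop, 0 ≤ z.re := tendsto_comap.eventually (eventually_ge_atTop 0)
  have hterm : ∀ k, Tendsto (fun z => cexp (-(τ k : ℂ) * z) • B k) (comap re atTop) (𝓝 0) :=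
    fun k => by simpa using (tendsto_cexp_neg_ofReal_mul_comap_re_atTop (hτ k)).smul_const (B k)
  have hbound : ∀ᶠ z in comap re atTop, ∀ k, ‖cexp (-(τ k : ℂ) * z) • B k‖ ≤ ‖B k‖ := by
    filter_upwards [hre] with z hz k
    rw [norm_smul, norm_cexp_neg_ofReal_mul]
    exact mul_le_of_le_one_left (norm_nonneg _)
      (Real.exp_le_one_iff.2 (neg_nonpos.2 (mul_nonneg (hτ k).le hz)))
  have h := tendsto_tsum_of_dominated_convergence hB hterm hbound
  rw [tsum_zero] at h
  exact h

lemma tendstoUniformlyOn_dirichletSeries {ι : Type*} {l : Filter ι} {B' : ι → ℕ → E}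
    {u : ℕ → ℝ} (hτ : ∀ k, τ k ∈ Icc 0 T) (hb : 0 ≤ b) (hu : Summable u)
    (hBu : ∀ k, ‖B k‖ ≤ u k) (hB'u : ∀ i k, ‖B' i k‖ ≤ u k)
    (hB' : ∀ k, Tendsto (B' · k) l (𝓝 (B k))) :
    TendstoUniformlyOn (fun i => dirichletSeries τ (B' i)) (dirichletSeries τ B) l
      {z | -b ≤ z.re} := by
  have hsum_u : ∀ {C : ℕ → E}, (∀ k, ‖C k‖ ≤ u k) → Summable (‖C ·‖) :=
    fun hC => hu.of_nonneg_of_le (fun _ => norm_nonneg _) hC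
  have hdiff : Tendsto (fun i => ∑' k, ‖B k - B' i k‖) l (𝓝 0) := by
    simpa using tendsto_tsum_of_dominated_convergence (f := fun i k => ‖B k - B' i k‖)
      (g := fun _ => 0) (hu.mul_left 2)
      (fun k => by simpa using ((hB' k).const_sub (B k)).norm)
      (Eventually.of_forall fun i k => by
        rw [norm_norm, two_mul]
        exact (norm_sub_le _ _).trans (add_le_add (hBu k) (hB'u i k)))
  rw [Metric.tendstoUniformlyOn_iff]
  intro ε hε
  filter_upwards [(hdiff.const_mul (Real.exp (T * b))).eventually_lt_const (by simpa using hε)]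
    with i hi z hz
  rw [dist_eq_norm, dirichletSeries_sub hτ (hsum_u hBu) (hsum_u (hB'u i))]
  have hsub : Summable (‖(B - B' i) ·‖) := ((hsum_u hBu).add (hsum_u (hB'u i))).of_nonneg_of_le
    (fun _ => norm_nonneg _) fun k => norm_sub_le _ _
  exact (norm_dirichletSeries_le hτ hsub hb hz).trans_lt hi

end DirichletSeries

section FiniteLaplace

variable {E : Type*} [NormedAddCommGroup E] [NormedSpace ℂ E] {T b : ℝ}
  {f : ℝ → E}

noncomputable def finiteLaplace (T : ℝ) (f : ℝ → E) (z : ℂ) : E :=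
  ∫ s in Ioo 0 T, cexp (-z * s) • f s

lemma MeasureTheory.IntegrableOn.continuous_smul_Ioo {g : ℝ → ℂ} (hg : Continuous g)
    (hf : IntegrableOn f (Ioo 0 T)) : IntegrableOn (fun s => g s • f s) (Ioo 0 T) :=
  hf.continuousOn_smul_of_subset hg.continuousOn isCompact_Icc measurableSet_Ioo
    Ioo_subset_Icc_self

lemma norm_cexp_neg_mul_smul_le (hb : 0 ≤ b) {z : ℂ} (hz : -b ≤ z.re) {s : ℝ}
    (hs : s ∈ Ioo 0 T) : ‖cexp (-z * s) • f s‖ ≤ Real.exp (T * b) * ‖f s‖ := by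
  rw [norm_smul, show -z * s = -(s : ℂ) * z by ring]
  exact mul_le_mul_of_nonneg_right
    (norm_cexp_neg_ofReal_mul_le (Ioo_subset_Icc_self hs) hb hz) (norm_nonneg _)

lemma norm_finiteLaplace_le (hf : IntegrableOn f (Ioo 0 T)) (hb : 0 ≤ b) {z : ℂ}
    (hz : -b ≤ z.re) :
    ‖finiteLaplace T f z‖ ≤ Real.exp (T * b) * ∫ s in Ioo 0 T, ‖f s‖ := by
  rw [← integral_const_mul]
  exact norm_integral_le_of_norm_le (hf.norm.const_mul _)
    ((ae_restrict_mem measurableSet_Ioo).mono fun s hs => norm_cexp_neg_mul_smul_le hb hz hs)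

lemma hasDerivAt_finiteLaplace (hf : IntegrableOn f (Ioo 0 T)) (z₀ : ℂ) :
    HasDerivAt (finiteLaplace T f) (finiteLaplace T (fun s => (-(s : ℂ)) • f s) z₀) z₀ := by
  have hf' : IntegrableOn (fun s : ℝ => (-(s : ℂ)) • f s) (Ioo 0 T) :=
    hf.continuous_smul_Ioo (by fun_prop)
  have hball : ∀ z ∈ ball z₀ 1, -(|z₀.re| + 1) ≤ z.re := fun z hz => by
    have h1 := abs_le.1 ((abs_re_le_norm (z - z₀)).trans (mem_ball_iff_norm.1 hz).le)
    rw [sub_re] at h1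
    linarith [neg_abs_le z₀.re]
  refine (hasDerivAt_integral_of_dominated_loc_of_deriv_le (ball_mem_nhds z₀ one_pos)
    (F := fun (z : ℂ) (s : ℝ) => cexp (-z * s) • f s)
    (F' := fun (z : ℂ) (s : ℝ) => cexp (-z * s) • (-(s : ℂ)) • f s)
    (Eventually.of_forall fun z => (hf.continuous_smul_Ioo (by fun_prop)).aestronglyMeasurable)
    (hf.continuous_smul_Ioo (by fun_prop))
    (hf'.continuous_smul_Ioo (by fun_prop)).aestronglyMeasurable
    ((ae_restrict_mem measurableSet_Ioo).mono fun s hs z hz =>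
      norm_cexp_neg_mul_smul_le (f := fun s : ℝ => (-(s : ℂ)) • f s) (by positivity)
        (hball z hz) hs)
    (hf'.norm.const_mul _) (Eventually.of_forall fun s z _ => ?_)).2
  have hexp : HasDerivAt (fun w : ℂ => cexp (-w * s)) (-(s : ℂ) * cexp (-z * s)) z := by
    simpa [mul_comm] using ((hasDerivAt_id z).neg.mul_const (s : ℂ)).cexp
  convert hexp.smul_const (f s) using 1
  rw [smul_smul, mul_comm]

lemma differentiable_finiteLaplace (hf : IntegrableOn f (Ioo 0 T)) :
    Differentiable ℂ (finiteLaplace T f) :=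
  fun z => (hasDerivAt_finiteLaplace hf z).differentiableAt

lemma lipschitzOnWith_finiteLaplace (hf : IntegrableOn f (Ioo 0 T)) (hb : 0 ≤ b) :
    LipschitzOnWith (Real.toNNReal (Real.exp (T * b) * ∫ s in Ioo 0 T, ‖(-(s : ℂ)) • f s‖))
      (finiteLaplace T f) {z | -b ≤ z.re} := by
  refine (convex_halfSpace_re_ge (-b)).lipschitzOnWith_of_nnnorm_hasDerivWithin_le
    (fun z _ => (hasDerivAt_finiteLaplace hf z).hasDerivWithinAt) fun z hz => ?_
  rw [← Real.toNNReal_coe (r := ‖_‖₊), coe_nnnorm]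
  exact Real.toNNReal_le_toNNReal
    (norm_finiteLaplace_le (hf.continuous_smul_Ioo (by fun_prop)) hb hz)

lemma tendsto_finiteLaplace_re_atTop (hf : IntegrableOn f (Ioo 0 T)) :
    Tendsto (finiteLaplace T f) (comap re atTop) (𝓝 0) := by
  have hre : ∀ᶠ z in comap re atTop, 0 ≤ z.re := tendsto_comap.eventually (eventually_ge_atTop 0)
  have hlim : ∀ᵐ s : ℝ ∂volume.restrict (Ioo 0 T),
      Tendsto (fun z : ℂ => cexp (-z * s) • f s) (comap re atTop) (𝓝 0) := by
    filter_upwards [ae_restrict_mem measurableSet_Ioo] with s hs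
    simp only [show ∀ z : ℂ, -z * s = -(s : ℂ) * z from fun z => by ring]
    simpa using (tendsto_cexp_neg_ofReal_mul_comap_re_atTop hs.1).smul_const (f s)
  have h := tendsto_integral_filter_of_dominated_convergence (μ := volume.restrict (Ioo 0 T))
    (F := fun (z : ℂ) (s : ℝ) => cexp (-z * s) • f s) (f := fun _ => 0) (bound := fun s => ‖f s‖)
    (Eventually.of_forall fun z => (hf.continuous_smul_Ioo (by fun_prop)).aestronglyMeasurable)
    (hre.mono fun z hz => (ae_restrict_mem measurableSet_Ioo).mono fun s hs => by
      simpa using norm_cexp_neg_mul_smul_le le_rfl (by simpa using hz) hs) hf.norm hlim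
  rw [integral_zero] at h
  exact h

lemma tendsto_finiteLaplace_add_mul_I_cocompact (w : ℂ) :
    Tendsto (fun y : ℝ => finiteLaplace T f (w + y * I)) (cocompact ℝ) (𝓝 0) := by
  have hRL := (Real.tendsto_integral_exp_smul_cocompact
    ((Ioo 0 T).indicator fun s => cexp (-w * s) • f s)).comp
      (tendsto_cocompact_mul_right₀ (inv_ne_zero Real.two_pi_pos.ne'))
  refine hRL.congr fun y => ?_
  simp only [Function.comp_apply, finiteLaplace]
  rw [← integral_indicator measurableSet_Ioo]
  congr 1
  funext v
  by_cases hv : v ∈ Ioo 0 T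
  · rw [indicator_of_mem hv, indicator_of_mem hv, Circle.smul_def, Real.fourierChar_apply,
      smul_smul, ← Complex.exp_add]
    congr 2
    push_cast
    field_simp
    ring
  · rw [indicator_of_notMem hv, indicator_of_notMem hv, smul_zero]

lemma tendstoUniformlyOn_finiteLaplace_add_mul_I (hf : IntegrableOn f (Ioo 0 T)) {K : Set ℂ}
    (hK : IsCompact K) :
    TendstoUniformlyOn (fun (y : ℝ) z => finiteLaplace T f (z + y * I)) 0 (cocompact ℝ) K := by
  obtain ⟨b, hb, hKb⟩ := hK.exists_forall_neg_le_re
  refine tendstoUniformlyOn_of_lipschitzOnWith hK (fun y =>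
    (lipschitzOnWith_finiteLaplace hf hb).comp
      (isometry_add_right _).lipschitz.lipschitzOnWith fun z hz => by simpa using hKb z hz)
    fun z _ => tendsto_finiteLaplace_add_mul_I_cocompact z

end FiniteLaplace

lemma Differentiable.matrix_det {m 𝕜 : Type*} [Fintype m] [DecidableEq m]
    [NontriviallyNormedField 𝕜] [CompleteSpace 𝕜] {Φ : 𝕜 → Matrix m m 𝕜}
    (hΦ : Differentiable 𝕜 Φ) : Differentiable 𝕜 fun x => (Φ x).det := by
  simp only [Matrix.det_apply']
  refine Differentiable.fun_sum fun σ _ =>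
    (Differentiable.fun_finsetProd fun i _ => ?_).const_mul _
  exact (LinearMap.toContinuousLinearMap (entryLinearMap 𝕜 𝕜 (σ i) i)).differentiable.comp hΦ

lemma TendstoUniformlyOn.comp_continuous_of_isCompact {ι X E F : Type*} [TopologicalSpace X]
    [NormedAddCommGroup E] [ProperSpace E] [PseudoMetricSpace F] {l : Filter ι} {h : E → F}
    {Φ : ι → X → E} {Q : X → E} {K : Set X} (hΦ : TendstoUniformlyOn Φ Q l K)
    (hh : Continuous h) (hQ : ContinuousOn Q K) (hK : IsCompact K) :
    TendstoUniformlyOn (fun i x => h (Φ i x)) (fun x => h (Q x)) l K := by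
  obtain ⟨R, hR⟩ := hK.exists_bound_of_continuousOn hQ
  have hΦR : ∀ᶠ i in l, ∀ x ∈ K, Φ i x ∈ closedBall 0 (R + 1) := by
    filter_upwards [Metric.tendstoUniformlyOn_iff.1 hΦ 1 one_pos] with i hi x hx
    rw [mem_closedBall_zero_iff]
    linarith [norm_le_norm_add_norm_sub' (Φ i x) (Q x), hR x hx,
      (dist_eq_norm' (Q x) (Φ i x)) ▸ hi x hx]
  exact (isCompact_closedBall 0 (R + 1)).uniformContinuousOn_of_continuous hh.continuousOn
    |>.comp_tendstoUniformlyOn_eventually hΦR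
      (fun x hx => mem_closedBall_zero_iff.2 ((hR x hx).trans (by linarith))) hΦ

lemma exists_subseq_tendsto_of_norm_le_one (u : ℕ → ℕ → ℂ) (hu : ∀ m k, ‖u m k‖ ≤ 1) :
    ∃ c : ℕ → ℂ, (∀ k, ‖c k‖ ≤ 1) ∧
      ∃ φ : ℕ → ℕ, StrictMono φ ∧ ∀ k, Tendsto (fun j => u (φ j) k) atTop (𝓝 (c k)) := by
  obtain ⟨c, hc, φ, hφ, hlim⟩ := (isCompact_univ_pi fun _ : ℕ => isCompact_closedBall (0 : ℂ) 1)
    |>.tendsto_subseq (x := u) fun m k _ => mem_closedBall_zero_iff.2 (hu m k)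
  exact ⟨c, fun k => mem_closedBall_zero_iff.1 (hc k (mem_univ k)), φ, hφ, tendsto_pi_nhds.1 hlim⟩

lemma le_norm_of_forall_sphere_le_norm {f : ℂ → ℂ} {c : ℂ} {r δ : ℝ} (hr : 0 < r)
    (hf : DifferentiableOn ℂ f (closedBall c r)) (hf0 : ∀ z ∈ closedBall c r, f z ≠ 0)
    (hδ : 0 < δ) (hsph : ∀ z ∈ sphere c r, δ ≤ ‖f z‖) : δ ≤ ‖f c‖ := by
  have hcl : closure (ball c r) = closedBall c r := closure_ball c hr.ne'
  have hinv : ‖(f c)⁻¹‖ ≤ δ⁻¹ := by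
    have hinvd : DifferentiableOn ℂ (fun z => (f z)⁻¹) (closure (ball c r)) :=
      hcl ▸ hf.inv hf0
    refine Complex.norm_le_of_forall_mem_frontier_norm_le isBounded_ball hinvd.diffContOnCl
      (fun z hz => ?_) (hcl ▸ mem_closedBall_self hr.le)
    rw [frontier_ball c hr.ne'] at hz
    rw [norm_inv]
    exact inv_anti₀ hδ (hsph z hz)
  rw [norm_inv] at hinv
  exact (inv_le_inv₀ (norm_pos_iff.2 (hf0 c (mem_closedBall_self hr.le))) hδ).1 hinv

lemma exists_sphere_ne_zero {g : ℂ → ℂ} (hg : Differentiable ℂ g) {z₁ : ℂ} (hz₁ : g z₁ ≠ 0)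
    (c : ℂ) {r : ℝ} (hr : 0 < r) : ∃ ρ ∈ Ioc 0 r, ∀ z ∈ sphere c ρ, g z ≠ 0 := by
  have hana : AnalyticOnNhd ℂ g univ := hg.differentiableOn.analyticOnNhd isOpen_univ
  rcases (hg.analyticAt c).eventually_eq_zero_or_eventually_ne_zero with hzero | hne
  · exact absurd (hana.eqOn_zero_of_preconnected_of_eventuallyEq_zero isPreconnected_univ
      (mem_univ c) hzero (mem_univ z₁)) hz₁
  obtain ⟨ε, hε, hball⟩ := Metric.eventually_nhds_iff_ball.1 (eventually_nhdsWithin_iff.1 hne)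
  refine ⟨min (ε / 2) r, ⟨by positivity, min_le_right _ _⟩, fun z hz => hball z ?_ ?_⟩
  · rw [mem_ball, mem_sphere.1 hz]
    exact (min_le_left _ _).trans_lt (half_lt_self hε)
  · rintro rfl
    simp only [mem_sphere, dist_self] at hz
    exact (lt_min (half_pos hε) hr).ne hz

theorem exists_eq_zero_of_tendstoUniformlyOn {ι : Type*} {l : Filter ι} [l.NeBot]
    {G : ι → ℂ → ℂ} {g : ℂ → ℂ} (hG : ∀ i, Differentiable ℂ (G i)) (hg : Differentiable ℂ g)
    {c z₁ : ℂ} (hgc : g c = 0) (hgz₁ : g z₁ ≠ 0) {r : ℝ} (hr : 0 < r)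
    (hGg : TendstoUniformlyOn G g l (closedBall c r)) : ∃ i, ∃ z ∈ closedBall c r, G i z = 0 := by
  obtain ⟨ρ, ⟨hρ, hρr⟩, hsph⟩ := exists_sphere_ne_zero hg hgz₁ c hr
  obtain ⟨w, hw, hmin⟩ := (isCompact_sphere c ρ).exists_isMinOn
    (NormedSpace.sphere_nonempty.2 hρ.le) hg.continuous.norm.continuousOn
  have hδ : 0 < ‖g w‖ := norm_pos_iff.2 (hsph w hw)
  have hsub : closedBall c ρ ⊆ closedBall c r := closedBall_subset_closedBall hρr
  obtain ⟨i, hi⟩ := (Metric.tendstoUniformlyOn_iff.1 hGg (‖g w‖ / 2) (half_pos hδ)).exists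
  by_contra! hne
  have hcenter := le_norm_of_forall_sphere_le_norm hρ (hG i).differentiableOn
    (fun z hz => hne i z (hsub hz)) (half_pos hδ) fun z hz => by
      have := hi z (hsub (sphere_subset_closedBall hz))
      have hmz : ‖g w‖ ≤ ‖g z‖ := hmin hz
      rw [dist_eq_norm] at this
      linarith [norm_le_norm_add_norm_sub' (g z) (G i z), norm_sub_rev (g z) (G i z)]
  have := hi c (mem_closedBall_self hr.le)
  rw [hgc, dist_zero_left] at this
  linarith

section CharMatrix

variable {n : ℕ} {T : ℝ} {τ : ℕ → ℝ} {B : ℕ → Matrix (Fin n) (Fin n) ℂ}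
  {f : ℝ → Matrix (Fin n) (Fin n) ℂ}

noncomputable def charMatrix (T : ℝ) (τ : ℕ → ℝ) (B : ℕ → Matrix (Fin n) (Fin n) ℂ)
    (f : ℝ → Matrix (Fin n) (Fin n) ℂ) (z : ℂ) : Matrix (Fin n) (Fin n) ℂ :=
  1 + dirichletSeries τ B z + finiteLaplace T f z

/- Integrability of matrix-valued functions is taken for the topology of the Frobenius norm, as in
the main theorem: the default topology instance on `Matrix` is the product topology. -/
lemma differentiable_charMatrix (hτ : ∀ k, τ k ∈ Icc 0 T) (hB : Summable (‖B ·‖))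
    (hf : @IntegrableOn ℝ _ _ _ SeminormedAddGroup.toContinuousENorm f (Ioo 0 T) volume) :
    Differentiable ℂ (charMatrix T τ B f) :=
  ((differentiable_const 1).add (differentiable_dirichletSeries hτ hB)).add
    (differentiable_finiteLaplace hf)

lemma tendsto_det_charMatrix_re_atTop (hτ : ∀ k, 0 < τ k) (hB : Summable (‖B ·‖))
    (hf : @IntegrableOn ℝ _ _ _ SeminormedAddGroup.toContinuousENorm f (Ioo 0 T) volume) :
    Tendsto (fun z => (charMatrix T τ B f z).det) (comap re atTop) (𝓝 1) := by
  have h := (tendsto_const_nhds (x := (1 : Matrix (Fin n) (Fin n) ℂ)).add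
    (tendsto_dirichletSeries_re_atTop hτ hB)).add (tendsto_finiteLaplace_re_atTop hf)
  rw [add_zero, add_zero] at h
  have hdet := (continuous_id.matrix_det.tendsto 1).comp h
  rw [id, det_one] at hdet
  exact hdet

lemma charMatrix_add_mul_I (z : ℂ) (y : ℝ) :
    charMatrix T τ B f (z + y * I)
      = charMatrix T τ (fun k => cexp (-(τ k : ℂ) * (y * I)) • B k) 0 z
        + finiteLaplace T f (z + y * I) := by
  simp [charMatrix, dirichletSeries_add_mul_I, finiteLaplace]

lemma tendstoUniformlyOn_charMatrix_add_mul_I {ι : Type*} {l : Filter ι}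
    (hτ : ∀ k, τ k ∈ Icc 0 T) (hB : Summable (‖B ·‖))
    (hf : @IntegrableOn ℝ _ _ _ SeminormedAddGroup.toContinuousENorm f (Ioo 0 T) volume)
    {y : ι → ℝ} (hy : Tendsto y l (cocompact ℝ)) {c : ℕ → ℂ} (hc : ∀ k, ‖c k‖ ≤ 1)
    (hphase : ∀ k, Tendsto (fun i => cexp (-(τ k : ℂ) * (y i * I))) l (𝓝 (c k)))
    {K : Set ℂ} (hK : IsCompact K) :
    TendstoUniformlyOn (fun i z => charMatrix T τ B f (z + y i * I))
      (charMatrix T τ (fun k => c k • B k) 0) l K := by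
  obtain ⟨b, hb, hKb⟩ := hK.exists_forall_neg_le_re
  have hD := tendstoUniformlyOn_dirichletSeries hτ hb hB
    (fun k => (norm_smul_le _ _).trans (mul_le_of_le_one_left (norm_nonneg _) (hc k)))
    (fun i k => by rw [norm_smul, norm_cexp_neg_ofReal_mul]; simp)
    (fun k => (hphase k).smul_const (B k))
  have hL : TendstoUniformlyOn (fun i z => finiteLaplace T f (z + y i * I)) 0 l K :=
    fun u hu => hy.eventually (tendstoUniformlyOn_finiteLaplace_add_mul_I hf hK u hu)
  have h := ((tendsto_const_nhds (x := (1 : Matrix (Fin n) (Fin n) ℂ))).tendstoUniformlyOn_const K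
    |>.add (hD.mono hKb)).add hL
  refine (h.congr (Eventually.of_forall fun i z _ => ?_)).congr_right fun z _ => ?_
  · rw [charMatrix_add_mul_I]
    simp [charMatrix, finiteLaplace]
  · simp [charMatrix, finiteLaplace]

lemma exists_det_charMatrix_eq_zero_of_tendsto_cocompact (hτ : ∀ k, τ k ∈ Ioc 0 T)
    (hB : Summable (‖B ·‖))
    (hf : @IntegrableOn ℝ _ _ _ SeminormedAddGroup.toContinuousENorm f (Ioo 0 T) volume)
    {zs : ℕ → ℂ} {x r : ℝ} (hre : Tendsto (fun m => (zs m).re) atTop (𝓝 x))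
    (him : Tendsto (fun m => (zs m).im) atTop (cocompact ℝ))
    (hdet : Tendsto (fun m => (charMatrix T τ B f (zs m)).det) atTop (𝓝 0)) (hr : 0 < r) :
    ∃ w, (charMatrix T τ B f w).det = 0 ∧ x - r ≤ w.re := by
  have hτ' : ∀ k, τ k ∈ Icc 0 T := fun k => Ioc_subset_Icc_self (hτ k)
  obtain ⟨c, hc, φ, hφ, hphase⟩ := exists_subseq_tendsto_of_norm_le_one
    (fun m k => cexp (-(τ k : ℂ) * ((zs m).im * I))) fun m k => by
      rw [norm_cexp_neg_ofReal_mul]; simp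
  set y : ℕ → ℝ := fun j => (zs (φ j)).im
  have hcB : Summable fun k => ‖c k • B k‖ := hB.of_nonneg_of_le (fun _ => norm_nonneg _)
    fun k => (norm_smul_le _ _).trans (mul_le_of_le_one_left (norm_nonneg _) (hc k))
  have hQ := differentiable_charMatrix hτ' hcB integrableOn_zero
  set g : ℂ → ℂ := fun z => (charMatrix T τ (fun k => c k • B k) 0 z).det
  have hunif : TendstoUniformlyOn (fun j z => (charMatrix T τ B f (z + y j * I)).det) g atTop
      (closedBall (x : ℂ) r) :=
    (tendstoUniformlyOn_charMatrix_add_mul_I hτ' hB hf (him.comp hφ.tendsto_atTop) hc hphase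
      (isCompact_closedBall _ _)).comp_continuous_of_isCompact continuous_id.matrix_det
      hQ.continuous.continuousOn (isCompact_closedBall _ _)
  have hgx : g x = 0 := by
    have hpts : Tendsto (fun j => ((zs (φ j)).re : ℂ)) atTop (𝓝[closedBall (x : ℂ) r] x) := by
      have h := (continuous_ofReal.tendsto x).comp (hre.comp hφ.tendsto_atTop)
      exact tendsto_nhdsWithin_iff.2 ⟨h, h.eventually (closedBall_mem_nhds _ hr)⟩
    refine tendsto_nhds_unique
      (hunif.tendsto_comp hQ.matrix_det.continuous.continuousWithinAt hpts) ?_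
    have hzs : ∀ j, ((zs (φ j)).re : ℂ) + y j * I = zs (φ j) := fun j => re_add_im _
    simp only [hzs]
    exact hdet.comp hφ.tendsto_atTop
  have : (comap re atTop).NeBot := atTop_neBot.comap_of_surj re_surjective
  obtain ⟨z₁, hz₁⟩ := ((tendsto_det_charMatrix_re_atTop (fun k => (hτ k).1) hcB
    integrableOn_zero).eventually_ne one_ne_zero).exists
  obtain ⟨j, z, hz, hzero⟩ := exists_eq_zero_of_tendstoUniformlyOn (fun j =>
    ((differentiable_charMatrix hτ' hB hf).comp (differentiable_id.add_const _)).matrix_det)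
    hQ.matrix_det hgx hz₁ hr hunif
  have hzx : |z.re - x| ≤ r := by
    simpa using (abs_re_le_norm (z - x)).trans (mem_closedBall_iff_norm.1 hz)
  exact ⟨z + y j * I, hzero, by simpa using (abs_le.1 hzx).1⟩

lemma exists_det_charMatrix_eq_zero_of_tendsto_zero (hτ : ∀ k, τ k ∈ Ioc 0 T)
    (hB : Summable (‖B ·‖))
    (hf : @IntegrableOn ℝ _ _ _ SeminormedAddGroup.toContinuousENorm f (Ioo 0 T) volume)
    {zs : ℕ → ℂ} {a r : ℝ} (hzs : ∀ m, a ≤ (zs m).re)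
    (hdet : Tendsto (fun m => (charMatrix T τ B f (zs m)).det) atTop (𝓝 0)) (hr : 0 < r) :
    ∃ w, (charMatrix T τ B f w).det = 0 ∧ a - r ≤ w.re := by
  obtain ⟨M, -, hM⟩ := (atTop_basis.comap re).eventually_iff.1 <|
    (tendsto_det_charMatrix_re_atTop (fun k => (hτ k).1) hB hf).norm.eventually
      (lt_mem_nhds (by norm_num : (1 : ℝ) / 2 < ‖(1 : ℂ)‖))
  have hstrip : ∀ᶠ m in atTop, (zs m).re ∈ Icc a M := by
    filter_upwards [hdet.norm.eventually (gt_mem_nhds (by norm_num : ‖(0 : ℂ)‖ < 1 / 2))]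
      with m hm
    exact ⟨hzs m, (not_le.1 fun h => lt_asymm hm (hM h)).le⟩
  obtain ⟨x, hx, φ, hφ, hxlim⟩ := isCompact_Icc.tendsto_subseq' hstrip.frequently
  have hdetφ := hdet.comp hφ.tendsto_atTop
  by_cases him : Tendsto (fun j => (zs (φ j)).im) atTop (cocompact ℝ)
  · obtain ⟨w, hw, hwre⟩ :=
      exists_det_charMatrix_eq_zero_of_tendsto_cocompact hτ hB hf hxlim him hdetφ hr
    exact ⟨w, hw, by linarith [hx.1]⟩
  rw [hasBasis_cocompact.tendsto_right_iff] at him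
  push Not at him
  obtain ⟨K, hK, hfreq⟩ := him
  obtain ⟨y, -, ψ, hψ, hylim⟩ :=
    hK.tendsto_subseq' (x := fun j => (zs (φ j)).im) (by simpa only [notMem_compl_iff] using hfreq)
  have hz : Tendsto (fun j => zs (φ (ψ j))) atTop (𝓝 (x + y * I)) := by
    have h := ((continuous_ofReal.tendsto x).comp (hxlim.comp hψ.tendsto_atTop)).add
      (((continuous_ofReal.tendsto y).comp hylim).mul_const I)
    simpa only [Function.comp_apply, re_add_im] using h
  refine ⟨x + y * I, tendsto_nhds_unique
    (((differentiable_charMatrix (fun k => Ioc_subset_Icc_self (hτ k)) hB hf).matrix_det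
      |>.continuous.tendsto _).comp hz) (hdetφ.comp hψ.tendsto_atTop), ?_⟩
  simpa using (show a - r ≤ x by linarith [hx.1])

end CharMatrix

lemma Matrix.frobenius_norm_map_ofReal {m : Type*} [Fintype m] (M : Matrix m m ℝ) :
    ‖M.map ofReal‖ = ‖M‖ :=
  frobenius_norm_map_eq _ _ fun a => norm_real a

theorem det_char_matrix_inf_pos_on_half_plane_general
    (n : ℕ) (τs : ℝ)
    (A : ℕ → Matrix (Fin n) (Fin n) ℝ) (hA : Summable fun k => ‖A k‖)
    (τ : ℕ → ℝ) (hτ : ∀ k, τ k ∈ Set.Ioc 0 τs)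
    (N : ℝ → Matrix (Fin n) (Fin n) ℝ) (hN : @IntegrableOn ℝ _ _ _ SeminormedAddGroup.toContinuousENorm N (Set.Ioo 0 τs) volume)
    (Δ : ℂ → Matrix (Fin n) (Fin n) ℂ)
    (hΔ : ∀ z : ℂ, Δ z =
      1 + (∑' k : ℕ, Complex.exp (-(τ k : ℂ) * z) • (A k).map Complex.ofReal)
        + ∫ s in Set.Ioo (0:ℝ) τs, Complex.exp (-z * s) • (N s).map Complex.ofReal)
    (ν₀ : ℝ)
    (hroots : ∀ z : ℂ, (Δ z).det = 0 → z.re < -ν₀) :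
    ∀ ν : ℝ, 0 < ν → ν < ν₀ →
      0 < ⨅ z : {z : ℂ // -ν ≤ z.re}, ‖(Δ (z : ℂ)).det‖ := by
  intro ν _ hνν₀
  have hΔc : Δ = charMatrix τs τ (fun k => (A k).map ofReal) (fun s => (N s).map ofReal) :=
    funext hΔ
  have hAc : Summable fun k => ‖(A k).map ofReal‖ := by
    simpa only [frobenius_norm_map_ofReal] using hA
  have hNc : @IntegrableOn ℝ _ _ _ SeminormedAddGroup.toContinuousENorm
      (fun s => (N s).map ofReal) (Ioo 0 τs) volume :=
    (integrable_norm_iff ((continuous_id.matrix_map continuous_ofReal).comp_aestronglyMeasurable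
      hN.aestronglyMeasurable)).1 (by simpa only [id, frobenius_norm_map_ofReal] using hN.norm)
  have : Nonempty {z : ℂ // -ν ≤ z.re} := ⟨⟨-ν, by simp⟩⟩
  refine (le_ciInf fun z => norm_nonneg _).lt_of_ne fun hinf => ?_
  obtain ⟨u, -, hu, hmem⟩ := exists_seq_tendsto_sInf
    (S := range fun z : {z : ℂ // -ν ≤ z.re} => ‖(Δ z).det‖) (range_nonempty _)
    ⟨0, forall_mem_range.2 fun z => norm_nonneg _⟩
  choose zs hzs using hmem
  have hdet : Tendsto (fun m => (Δ (zs m : ℂ)).det) atTop (𝓝 0) := by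
    rw [tendsto_zero_iff_norm_tendsto_zero]
    simp only [hzs]
    convert hu using 2
    exact hinf
  obtain ⟨w, hw, hwre⟩ := exists_det_charMatrix_eq_zero_of_tendsto_zero hτ hAc hNc
    (zs := fun m => zs m) (fun m => (zs m).prop) (hΔc ▸ hdet) (sub_pos.2 hνν₀)
  linarith [hroots w (hΔc ▸ hw)]

/-- if all zeros of `det Δ` lie in `{Re z < -ν₀}`, then for every
`0 < ν < ν₀` the infimum of `|det Δ(z)|` over `{Re z ≥ -ν}` is strictly positive. -/
theorem det_char_matrix_inf_pos_on_half_plane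
    (n : ℕ) (hn : 1 ≤ n) (τs : ℝ) (hτs : 0 < τs)
    (A : ℕ → Matrix (Fin n) (Fin n) ℝ) (hA : Summable fun k => ‖A k‖)
    (τ : ℕ → ℝ) (hτmono : StrictMono τ) (hτ : ∀ k, τ k ∈ Set.Ioc 0 τs)
    (N : ℝ → Matrix (Fin n) (Fin n) ℝ) (hN : @IntegrableOn ℝ _ _ _ SeminormedAddGroup.toContinuousENorm N (Set.Ioo 0 τs) volume)
    (Δ : ℂ → Matrix (Fin n) (Fin n) ℂ)
    (hΔ : ∀ z : ℂ, Δ z =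
      1 + (∑' k : ℕ, Complex.exp (-(τ k : ℂ) * z) • (A k).map Complex.ofReal)
        + ∫ s in Set.Ioo (0:ℝ) τs, Complex.exp (-z * s) • (N s).map Complex.ofReal)
    (ν₀ : ℝ) (hν₀ : 0 < ν₀)
    (hroots : ∀ z : ℂ, (Δ z).det = 0 → z.re < -ν₀) :
    ∀ ν : ℝ, 0 < ν → ν < ν₀ →
      0 < ⨅ z : {z : ℂ // -ν ≤ z.re}, ‖(Δ (z : ℂ)).det‖ :=
  det_char_matrix_inf_pos_on_half_plane_general n τs A hA τ hτ N hN Δ hΔ ν₀ hroots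
end

section
/- Let X₀ : [−τ*, 0] → ℝⁿ be measurable and let X : [−τ*, ∞) → ℝⁿ be a measurable, locally integrable function with X = X₀ almost everywhere on [−τ*, 0]. Define x(t) = X(t)·1_{t ≥ 0} and, for t ∈ ℝ, f(t) = −1_{[0,τ*]}(t) · ( Σ_{k=1}^∞ A_k X₀(t − τ_k) 1_{t < τ_k} + ∫_t^{τ*} N(s) X₀(t − s) ds ). Then X satisfies, for almost every t > 0, X(t) + Σ_{k=1}^∞ A_k X(t − τ_k) + ∫₀^{τ*} N(s) X(t − s) ds = 0, if and only if x satisfies, for almost every t ≥ 0, x(t) + Σ_{k=1}^∞ A_k x(t − τ_k) 1_{t ≥ τ_k} + ∫₀^{min(t, τ*)} N(s) x(t − s) ds = f(t). -/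
/-!
Both equations are convolution equations with the same kernel `Σ A_k δ_{τ_k} + N(s) ds`, a
finite measure carried by `[0, τ*]`. At a time `t > 0`, splitting every delay term according to
whether `t - s ≥ 0` or `t - s < 0` separates the part that sees `x` from the part that sees the
history `X₀`, and the latter is exactly `-f(t)`. The splitting is legitimate for almost every `t`:
by Tonelli, `∫₀^m ∫ |X(t - s)| d|μ|(s) dt ≤ |μ| ∫_{-τ*}^m |X| < ∞`, so the delay series converges
absolutely and the convolution integrand is integrable for a.e. `t`; and `X = X₀` a.e. on
`[-τ*, 0]` survives the shifts `t ↦ t - s` because Lebesgue measure is translation invariant.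
-/

open MeasureTheory Matrix Filter Complex

attribute [local instance] Matrix.frobeniusNormedAddCommGroup Matrix.frobeniusNormedSpace

open Set
open scoped ENNReal

section MatrixBounds

variable {m n : Type*} [Fintype m] [Fintype n]

theorem Matrix.norm_entry_le_frobenius_norm (A : Matrix m n ℝ) (i : m) (j : n) :
    ‖A i j‖ ≤ ‖A‖ :=
  (PiLp.norm_apply_le (WithLp.toLp 2 fun j => A i j) j).trans
    (PiLp.norm_apply_le (WithLp.toLp 2 fun i => WithLp.toLp 2 fun j => A i j) i)

theorem Matrix.norm_mulVec_le_card_mul (A : Matrix m n ℝ) (v : n → ℝ) :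
    ‖A *ᵥ v‖ ≤ Fintype.card n * ‖A‖ * ‖v‖ := by
  refine pi_norm_le_iff_of_nonneg (by positivity) |>.mpr fun i => ?_
  calc ‖(A *ᵥ v) i‖ ≤ ∑ j, ‖A i j * v j‖ := norm_sum_le _ _
    _ ≤ ∑ _j : n, ‖A‖ * ‖v‖ := by
        gcongr with j
        rw [norm_mul]
        exact mul_le_mul (A.norm_entry_le_frobenius_norm i j) (norm_le_pi_norm v j)
          (norm_nonneg _) (norm_nonneg _)
    _ = Fintype.card n * ‖A‖ * ‖v‖ := by simp [mul_assoc]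

theorem Matrix.enorm_mulVec_le_card_mul (A : Matrix m n ℝ) (v : n → ℝ) :
    ‖A *ᵥ v‖ₑ ≤ Fintype.card n * ‖A‖ₑ * ‖v‖ₑ := by
  rw [← ofReal_norm, ← ofReal_norm, ← ofReal_norm, ← ENNReal.ofReal_natCast,
    ← ENNReal.ofReal_mul (by positivity), ← ENNReal.ofReal_mul (by positivity)]
  exact ENNReal.ofReal_le_ofReal (A.norm_mulVec_le_card_mul v)

end MatrixBounds

theorem ae_lintegral_enorm_comp_sub_lt_top {E : Type*} [NormedAddCommGroup E] [MeasurableSpace E]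
    [OpensMeasurableSpace E] {g : ℝ → E} {a : ℝ} (hg_meas : Measurable g)
    (hg : LocallyIntegrableOn g (Ici (-a)))
    {μ : Measure ℝ} [SFinite μ] (hμ : μ univ ≠ ∞) (hμa : ∀ᵐ s ∂μ, s ∈ Icc 0 a) :
    ∀ᵐ t, 0 < t → ∫⁻ s, ‖g (t - s)‖ₑ ∂μ < ∞ := by
  have hF : Measurable (Function.uncurry fun t s => ‖g (t - s)‖ₑ) :=
    (hg_meas.comp (measurable_fst.sub measurable_snd)).enorm
  have hfin (m : ℕ) : ∫⁻ t in Ioc 0 (m : ℝ), ∫⁻ s, ‖g (t - s)‖ₑ ∂μ ≠ ∞ := by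
    set G := (Icc (-a) m).indicator fun u => ‖g u‖ₑ
    have hshift : ∀ᵐ s ∂μ, ∫⁻ t in Ioc 0 (m : ℝ), ‖g (t - s)‖ₑ ≤ ∫⁻ u, G u := by
      filter_upwards [hμa] with s hs
      rw [← lintegral_sub_right_eq_self G s, ← lintegral_indicator measurableSet_Ioc]
      refine lintegral_mono fun t => ?_
      by_cases ht : t ∈ Ioc 0 (m : ℝ)
      · have hts : t - s ∈ Icc (-a) m := ⟨by linarith [hs.2, ht.1], by linarith [hs.1, ht.2]⟩
        rw [indicator_of_mem ht]
        exact (indicator_of_mem hts (fun u => ‖g u‖ₑ)).ge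
      · simp [indicator_of_notMem ht]
    have hgm : IntegrableOn g (Icc (-a) m) :=
      hg.integrableOn_compact_subset (fun u hu => hu.1) isCompact_Icc
    refine (calc ∫⁻ t in Ioc 0 (m : ℝ), ∫⁻ s, ‖g (t - s)‖ₑ ∂μ
        = ∫⁻ s, (∫⁻ t in Ioc 0 (m : ℝ), ‖g (t - s)‖ₑ) ∂μ :=
          lintegral_lintegral_swap hF.aemeasurable
      _ ≤ ∫⁻ _s, (∫⁻ u, G u) ∂μ := lintegral_mono_ae hshift
      _ = μ univ * ∫⁻ u in Icc (-a) m, ‖g u‖ₑ := by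
        rw [lintegral_const, lintegral_indicator measurableSet_Icc, mul_comm]
      _ < ∞ := ENNReal.mul_lt_top hμ.lt_top hgm.2).ne
  have hae (m : ℕ) : ∀ᵐ t, t ∈ Ioc 0 (m : ℝ) → ∫⁻ s, ‖g (t - s)‖ₑ ∂μ < ∞ :=
    ae_imp_of_ae_restrict (ae_lt_top hF.lintegral_prod_right' (hfin m))
  filter_upwards [ae_all_iff.mpr hae] with t ht ht0
  exact ht ⌈t⌉₊ ⟨ht0, Nat.le_ceil t⟩

section Kernels

variable {m n : Type*} [Fintype m] [Fintype n] {a : ℝ} {X : ℝ → n → ℝ}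

theorem ae_summable_mulVec_comp_sub {A : ℕ → Matrix m n ℝ} (hA : Summable fun k => ‖A k‖)
    {τ : ℕ → ℝ} (hτ : ∀ k, τ k ∈ Icc 0 a) (hX_meas : Measurable X)
    (hX : LocallyIntegrableOn X (Ici (-a))) :
    ∀ᵐ t, 0 < t → Summable fun k => A k *ᵥ X (t - τ k) := by
  let μ : Measure ℝ := Measure.sum fun k => ‖A k‖ₑ • Measure.dirac (τ k)
  have hμ : μ univ ≠ ∞ := by
    simpa [μ] using tsum_enorm_ne_top_iff_summable_norm.mpr hA
  have hμa : ∀ᵐ s ∂μ, s ∈ Icc 0 a := Measure.ae_sum_iff.mpr fun k =>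
    Measure.ae_smul_measure ((ae_dirac_iff measurableSet_Icc).mpr (hτ k)) _
  filter_upwards [ae_lintegral_enorm_comp_sub_lt_top hX_meas hX hμ hμa] with t ht ht0
  have hsum : ∑' k, ‖A k‖ₑ * ‖X (t - τ k)‖ₑ ≠ ∞ := by
    simpa [μ, lintegral_sum_measure] using (ht ht0).ne
  refine .of_norm_bounded ((ENNReal.summable_toReal hsum).mul_left (Fintype.card n : ℝ))
    fun k => ?_
  simpa [mul_assoc] using (A k).norm_mulVec_le_card_mul (X (t - τ k))

-- Instance search does not find the Frobenius norm as a `ContinuousENorm`, hence the explicit `@`.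
theorem ae_integrableOn_mulVec_comp_sub {N : ℝ → Matrix m n ℝ}
    (hN : @IntegrableOn _ _ _ _ SeminormedAddGroup.toContinuousENorm N (Ioo 0 a) volume)
    (hX_meas : Measurable X) (hX : LocallyIntegrableOn X (Ici (-a))) :
    ∀ᵐ t, 0 < t → IntegrableOn (fun s => N s *ᵥ X (t - s)) (Ioo 0 a) := by
  let μ : Measure ℝ := (volume.restrict (Ioo 0 a)).withDensity fun s => ‖N s‖ₑ
  have hμ : μ univ ≠ ∞ := by
    simpa [μ] using hN.2.ne
  have hμa : ∀ᵐ s ∂μ, s ∈ Icc 0 a :=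
    (withDensity_absolutelyContinuous _ _).ae_le
      ((ae_restrict_mem measurableSet_Ioo).mono fun s hs => Ioo_subset_Icc_self hs)
  filter_upwards [ae_lintegral_enorm_comp_sub_lt_top hX_meas hX hμ hμa] with t ht ht0
  have hXt : Measurable fun s => X (t - s) := hX_meas.comp (measurable_const.sub measurable_id)
  refine ⟨(continuous_fst.matrix_mulVec continuous_snd).comp_aestronglyMeasurable₂ hN.1
    hXt.aestronglyMeasurable, ?_⟩
  rw [hasFiniteIntegral_def]
  calc ∫⁻ s in Ioo 0 a, ‖N s *ᵥ X (t - s)‖ₑ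
      ≤ ∫⁻ s in Ioo 0 a, Fintype.card n * (‖N s‖ₑ * ‖X (t - s)‖ₑ) :=
        lintegral_mono fun s => by simpa [mul_assoc] using (N s).enorm_mulVec_le_card_mul _
    _ = Fintype.card n * ∫⁻ s, ‖X (t - s)‖ₑ ∂μ := by
        rw [lintegral_const_mul' _ _ (ENNReal.natCast_ne_top _),
          lintegral_withDensity_eq_lintegral_mul₀ hN.1.enorm hXt.enorm.aemeasurable]
        rfl
    _ < ∞ := ENNReal.mul_lt_top (ENNReal.natCast_lt_top _) (ht ht0)

end Kernels

theorem tsum_eq_tsum_ite_add_tsum_ite {ι E : Type*} [NormedAddCommGroup E] [CompleteSpace E]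
    {f : ι → E} (hf : Summable f) (p : ι → Prop) [DecidablePred p] :
    ∑' i, f i = ∑' i, (if p i then f i else 0) + ∑' i, (if p i then 0 else f i) := by
  have hp : Summable fun i => if p i then f i else 0 := by
    convert hf.indicator {i | p i} using 1
    ext i; by_cases h : p i <;> simp [h]
  have hnp : Summable fun i => if p i then 0 else f i := by
    convert hf.indicator {i | ¬p i} using 1
    ext i; by_cases h : p i <;> simp [h]
  rw [← hp.tsum_add hnp]
  exact tsum_congr fun i => by split_ifs <;> simp

theorem setIntegral_Ioo_eq_add_setIntegral_Ioo {E : Type*} [NormedAddCommGroup E]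
    [NormedSpace ℝ E] {F : ℝ → E} {a b t : ℝ} (hat : a < t) (hF : IntegrableOn F (Ioo a b)) :
    ∫ s in Ioo a b, F s = (∫ s in Ioo a (min t b), F s) + ∫ s in Ioo t b, F s := by
  have hinter : Ioo a b ∩ Iio t = Ioo a (min t b) := by
    rw [Ioo_inter_Iio, min_comm]
  have hdiff : Ioo a b \ Iio t = Ico t b := by
    ext s
    simp only [Set.mem_sdiff, mem_Ioo, mem_Iio, mem_Ico, not_lt]
    exact ⟨fun h => ⟨h.2, h.1.2⟩, fun h => ⟨⟨hat.trans_le h.1, h.2⟩, h.1⟩⟩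
  rw [← integral_inter_add_sdiff measurableSet_Iio hF, hinter, hdiff,
    integral_Ico_eq_integral_Ioo]

section Forcing

variable {m n : Type*} [Fintype m] [Fintype n] (A : ℕ → Matrix m n ℝ) (τ : ℕ → ℝ)
  (N : ℝ → Matrix m n ℝ) (τs : ℝ) (X₀ : ℝ → n → ℝ)

/-- The contribution of the initial datum to the delay terms at time `u`; the forcing of the
Volterra form is `f = -1_{[0, τ*]} • historyForcing`. -/
noncomputable def historyForcing (u : ℝ) : m → ℝ :=
  (∑' k, if u < τ k then A k *ᵥ X₀ (u - τ k) else 0) + ∫ s in Ioo u τs, N s *ᵥ X₀ (u - s)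

variable {A τ N τs X₀}

theorem historyForcing_eq_zero (hτ : ∀ k, τ k ≤ τs) {u : ℝ} (hu : τs < u) :
    historyForcing A τ N τs X₀ u = 0 := by
  have hτu (k : ℕ) : ¬u < τ k := not_lt.mpr ((hτ k).trans hu.le)
  simp [historyForcing, hτu, Ioo_eq_empty_of_le hu.le]

theorem indicator_Icc_historyForcing (hτ : ∀ k, τ k ≤ τs) {u : ℝ} (hu : 0 ≤ u) :
    (Icc 0 τs).indicator (historyForcing A τ N τs X₀) u = historyForcing A τ N τs X₀ u := by
  rcases le_or_gt u τs with huτ | huτ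
  · exact indicator_of_mem (show u ∈ Icc 0 τs from ⟨hu, huτ⟩) _
  · rw [indicator_of_notMem fun h => huτ.not_ge h.2, historyForcing_eq_zero hτ huτ]

end Forcing

theorem delay_equation_at_iff_volterra_equation_at {n : Type*} [Fintype n]
    {A : ℕ → Matrix n n ℝ} {τ : ℕ → ℝ} {N : ℝ → Matrix n n ℝ} {τs t : ℝ} {X₀ X x : ℝ → n → ℝ}
    (ht : 0 < t) (hsum : Summable fun k => A k *ᵥ X (t - τ k))
    (hint : IntegrableOn (fun s => N s *ᵥ X (t - s)) (Ioo 0 τs))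
    (hX₀τ : ∀ k, t < τ k → X (t - τ k) = X₀ (t - τ k))
    (hX₀ : ∀ᵐ s ∂volume.restrict (Ioo t τs), X (t - s) = X₀ (t - s))
    (hx : ∀ u, 0 ≤ u → x u = X u) :
    X t + (∑' k, A k *ᵥ X (t - τ k)) + (∫ s in Ioo 0 τs, N s *ᵥ X (t - s)) = 0 ↔
      x t + (∑' k, if τ k ≤ t then A k *ᵥ x (t - τ k) else 0)
        + (∫ s in Ioo 0 (min t τs), N s *ᵥ x (t - s)) = -historyForcing A τ N τs X₀ t := by
  have hseries : ∑' k, A k *ᵥ X (t - τ k) =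
      (∑' k, if τ k ≤ t then A k *ᵥ x (t - τ k) else 0)
        + ∑' k, if t < τ k then A k *ᵥ X₀ (t - τ k) else 0 := by
    rw [tsum_eq_tsum_ite_add_tsum_ite hsum fun k => τ k ≤ t]
    congr 1 <;> refine tsum_congr fun k => ?_
    · split_ifs with h
      · rw [hx _ (sub_nonneg.mpr h)]
      · rfl
    · by_cases h : τ k ≤ t
      · simp [h, not_lt.mpr h]
      · rw [if_neg h, if_pos (not_le.mp h), hX₀τ k (not_le.mp h)]
  have hconv : ∫ s in Ioo 0 τs, N s *ᵥ X (t - s) =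
      (∫ s in Ioo 0 (min t τs), N s *ᵥ x (t - s)) + ∫ s in Ioo t τs, N s *ᵥ X₀ (t - s) := by
    rw [setIntegral_Ioo_eq_add_setIntegral_Ioo ht hint]
    congr 1
    · refine setIntegral_congr_fun measurableSet_Ioo fun s hs => ?_
      rw [hx _ (sub_nonneg.mpr (hs.2.le.trans (min_le_left t τs)))]
    · exact integral_congr_ae (hX₀.mono fun s hs => congrArg (N s *ᵥ ·) hs)
  rw [hseries, hconv, hx t ht.le, historyForcing, ← add_eq_zero_iff_eq_neg]
  convert Iff.rfl using 2
  abel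

theorem IDE_iff_volterra_form_general
    (n : ℕ) (τs : ℝ)
    (A : ℕ → Matrix (Fin n) (Fin n) ℝ) (hA : Summable fun k => ‖A k‖)
    (τ : ℕ → ℝ) (hτ : ∀ k, τ k ∈ Set.Ioc 0 τs)
    (N : ℝ → Matrix (Fin n) (Fin n) ℝ) (hN : @IntegrableOn _ _ _ _ SeminormedAddGroup.toContinuousENorm N (Set.Ioo 0 τs) volume)
    (X₀ : ℝ → (Fin n → ℝ))
    (X : ℝ → (Fin n → ℝ)) (hXmeas : Measurable X)
    (hXloc : LocallyIntegrableOn X (Set.Ici (-τs)))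
    (hinit : ∀ᵐ t : ℝ, t ∈ Set.Icc (-τs) 0 → X t = X₀ t)
    (x : ℝ → (Fin n → ℝ)) (hx : ∀ t : ℝ, x t = if 0 ≤ t then X t else 0)
    (f : ℝ → (Fin n → ℝ))
    (hf : ∀ t : ℝ, f t =
      -(Set.Icc (0:ℝ) τs).indicator (fun u =>
        (∑' k : ℕ, if u < τ k then (A k) *ᵥ X₀ (u - τ k) else 0)
        + ∫ s in Set.Ioo u τs, (N s) *ᵥ X₀ (u - s)) t) :
    (∀ᵐ t : ℝ, 0 < t →
      X t + (∑' k : ℕ, (A k) *ᵥ X (t - τ k))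
        + (∫ s in Set.Ioo (0:ℝ) τs, (N s) *ᵥ X (t - s)) = 0)
    ↔
    (∀ᵐ t : ℝ, 0 ≤ t →
      x t + (∑' k : ℕ, if τ k ≤ t then (A k) *ᵥ x (t - τ k) else 0)
        + (∫ s in Set.Ioo (0:ℝ) (min t τs), (N s) *ᵥ x (t - s)) = f t) := by
  have hτIcc (k : ℕ) : τ k ∈ Icc 0 τs := Ioc_subset_Icc_self (hτ k)
  have hinit_τ : ∀ᵐ t, ∀ k, t - τ k ∈ Icc (-τs) 0 → X (t - τ k) = X₀ (t - τ k) :=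
    ae_all_iff.mpr fun k =>
      (measurePreserving_sub_right volume (τ k)).quasiMeasurePreserving.ae hinit
  have hinit_conv (t : ℝ) : ∀ᵐ s, t - s ∈ Icc (-τs) 0 → X (t - s) = X₀ (t - s) :=
    (Measure.measurePreserving_sub_left volume t).quasiMeasurePreserving.ae hinit
  have key : ∀ᵐ t, 0 < t →
      (X t + (∑' k, A k *ᵥ X (t - τ k)) + (∫ s in Ioo 0 τs, N s *ᵥ X (t - s)) = 0 ↔
        x t + (∑' k, if τ k ≤ t then A k *ᵥ x (t - τ k) else 0)
          + (∫ s in Ioo 0 (min t τs), N s *ᵥ x (t - s)) = f t) := by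
    filter_upwards [ae_summable_mulVec_comp_sub hA hτIcc hXmeas hXloc,
      ae_integrableOn_mulVec_comp_sub hN hXmeas hXloc, hinit_τ] with t hsum hint hinit_τt ht
    have hft : f t = -historyForcing A τ N τs X₀ t :=
      (hf t).trans (congrArg Neg.neg (indicator_Icc_historyForcing (fun k => (hτ k).2) ht.le))
    rw [hft]
    refine delay_equation_at_iff_volterra_equation_at ht (hsum ht) (hint ht)
      (fun k hk => hinit_τt k ⟨by linarith [(hτ k).2], by linarith⟩) ?_
      (fun u hu => by rw [hx u, if_pos hu])
    exact (ae_restrict_iff' measurableSet_Ioo).mpr ((hinit_conv t).mono fun s hs hst =>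
      hs ⟨by linarith [hst.2], by linarith [hst.1]⟩)
  have hIoi : ∀ᵐ t : ℝ, (0 < t) = (0 ≤ t) := Ioi_ae_eq_Ici
  refine eventually_congr ((key.and hIoi).mono fun t ⟨hkey, hpos⟩ => ?_)
  rw [← hpos]
  exact imp_congr_right hkey

/-- one-to-one correspondence between solutions of the IDE with
initial datum `X₀` and solutions of the Volterra equation `x + μ*x = f`. -/
theorem IDE_iff_volterra_form
    (n : ℕ) (hn : 1 ≤ n) (τs : ℝ) (hτs : 0 < τs)
    (A : ℕ → Matrix (Fin n) (Fin n) ℝ) (hA : Summable fun k => ‖A k‖)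
    (τ : ℕ → ℝ) (hτmono : StrictMono τ) (hτ : ∀ k, τ k ∈ Set.Ioc 0 τs)
    (N : ℝ → Matrix (Fin n) (Fin n) ℝ) (hN : @IntegrableOn _ _ _ _ SeminormedAddGroup.toContinuousENorm N (Set.Ioo 0 τs) volume)
    (X₀ : ℝ → (Fin n → ℝ)) (hX₀meas : Measurable X₀)
    (X : ℝ → (Fin n → ℝ)) (hXmeas : Measurable X)
    (hXloc : LocallyIntegrableOn X (Set.Ici (-τs)))
    (hinit : ∀ᵐ t : ℝ, t ∈ Set.Icc (-τs) 0 → X t = X₀ t)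
    (x : ℝ → (Fin n → ℝ)) (hx : ∀ t : ℝ, x t = if 0 ≤ t then X t else 0)
    (f : ℝ → (Fin n → ℝ))
    (hf : ∀ t : ℝ, f t =
      -(Set.Icc (0:ℝ) τs).indicator (fun u =>
        (∑' k : ℕ, if u < τ k then (A k) *ᵥ X₀ (u - τ k) else 0)
        + ∫ s in Set.Ioo u τs, (N s) *ᵥ X₀ (u - s)) t) :
    (∀ᵐ t : ℝ, 0 < t →
      X t + (∑' k : ℕ, (A k) *ᵥ X (t - τ k))
        + (∫ s in Set.Ioo (0:ℝ) τs, (N s) *ᵥ X (t - s)) = 0)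
    ↔
    (∀ᵐ t : ℝ, 0 ≤ t →
      x t + (∑' k : ℕ, if τ k ≤ t then (A k) *ᵥ x (t - τ k) else 0)
        + (∫ s in Set.Ioo (0:ℝ) (min t τs), (N s) *ᵥ x (t - s)) = f t) :=
  IDE_iff_volterra_form_general n τs A hA τ hτ N hN X₀ X hXmeas hXloc hinit x hx f hf
end
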